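/- Correlation derivative identity via random currents: for the Ising model on a finite graph with ferromagnetic couplings, for any Q ⊆ V and edge uv, (Z_G/2^{|V|})² · [⟨σ_Q σ_u σ_v⟩ - ⟨σ_Q⟩⟨σ_u σ_v⟩] = Σ w(n¹)w(n²)·1[u not connected to v in n¹+n²], where the sum is over pairs of currents n¹, n² with ∂n¹ = Q Δ {u,v} and ∂n² = ∅. In particular ⟨σ_Q σ_u σ_v⟩ - ⟨σ_Q⟩⟨σ_u σ_v⟩ ≥ 0. -/

import Mathlib

open scoped Classical BigOperators

def spin {V : Type*} (σ : V → Bool) (u : V) : ℝ := if σ u then 1 else -1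

def curDeg {V E : Type*} [Fintype E] [DecidableEq V] (ep : E → V × V)
    (n : E → ℕ) (u : V) : ℕ :=
  ∑ e, n e * ((if (ep e).1 = u then 1 else 0) + (if (ep e).2 = u then 1 else 0))

def curSources {V E : Type*} [Fintype V] [Fintype E] [DecidableEq V]
    (ep : E → V × V) (n : E → ℕ) : Finset V :=
  Finset.univ.filter fun u => Odd (curDeg ep n u)

noncomputable def curWt {E : Type*} [Fintype E] (J : E → ℝ) (n : E → ℕ) : ℝ :=
  ∏ e, J e ^ n e / (Nat.factorial (n e) : ℝ)

def curConn {V E : Type*} (ep : E → V × V) (n : E → ℕ) (u v : V) : Prop :=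
  Relation.ReflTransGen (fun x y => ∃ e, 0 < n e ∧ (ep e = (x, y) ∨ ep e = (y, x))) u v

/-- Ising weight with edge couplings. -/
noncomputable def edgeWt {V E : Type*} [Fintype E] (ep : E → V × V) (J : E → ℝ)
    (σ : V → Bool) : ℝ :=
  Real.exp (∑ e, J e * spin σ (ep e).1 * spin σ (ep e).2)

/-- Ising expectation with edge couplings. -/
noncomputable def edgeEv {V E : Type*} [Fintype V] [DecidableEq V] [Fintype E]
    (ep : E → V × V) (J : E → ℝ) (f : (V → Bool) → ℝ) : ℝ :=
  (∑ σ : V → Bool, f σ * edgeWt ep J σ) / (∑ σ : V → Bool, edgeWt ep J σ)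

/-!
Expanding every factor `exp (J_e σ_x σ_y)` of the Gibbs weight as a power series and summing
over spins turns `∑_σ σ_A e^{H(σ)}` into `2^|V| Z_A`, where `Z_A` is the total weight of the
currents with source set `A`. The left-hand side is therefore `Z_{Q∆{u,v}} Z_∅ - Z_Q Z_{u,v}`.

Switching lemma: group pairs of currents by their sum `m`. Since
`w(k) w(m - k) = w(m) ∏_e C(m_e, k_e)`, the pairs with sum `m` and sources `(R, ·)` are counted by
the submultigraphs of `m` (with `m_e` parallel copies of `e`) with source set `R`. If `u ↔ v` in
`m`, taking the symmetric difference with a `u`–`v` path in `m` matches submultigraphs with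
sources `Q` with those with sources `Q ∆ {u,v}`, so `Z_Q Z_{u,v}` is exactly the part of
`Z_{Q∆{u,v}} Z_∅` carried by pairs whose sum connects `u` to `v`. If `u` and `v` are not
connected in `m`, no current below `m` has sources `{u,v}`, and pairs with sum `m` contribute to
neither side.
-/

open Finset
open scoped symmDiff ENNReal

theorem summable_norm_and_hasSum_prod_pi {ι κ R : Type*} [Fintype ι] [NormedCommRing R]
    [CompleteSpace R] (f : ι → κ → R) (hf : ∀ i, Summable fun k => ‖f i k‖) :
    Summable (fun n : ι → κ => ‖∏ i, f i (n i)‖) ∧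
      HasSum (fun n : ι → κ => ∏ i, f i (n i)) (∏ i, ∑' k, f i k) := by
  let P : ∀ (α : Type _) [Fintype α], Prop := fun α _ => ∀ f : α → κ → R,
    (∀ i, Summable fun k => ‖f i k‖) → Summable (fun n : α → κ => ‖∏ i, f i (n i)‖) ∧
      HasSum (fun n : α → κ => ∏ i, f i (n i)) (∏ i, ∑' k, f i k)
  suffices P ι from this f hf
  apply Fintype.induction_empty_option
  · intro α β _ e ih f hf
    let _ : Fintype α := Fintype.ofEquiv β e.symm
    obtain ⟨hs, hh⟩ := ih (fun a => f (e a)) fun a => hf (e a)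
    let eκ : (α → κ) ≃ (β → κ) := e.arrowCongr (Equiv.refl κ)
    have hcomp (n : α → κ) : ∏ b, f b (eκ n b) = ∏ a, f (e a) (n a) :=
      (Fintype.prod_equiv e _ _ fun a => by simp [eκ]).symm
    rw [← eκ.summable_iff, ← eκ.hasSum_iff,
      ← Fintype.prod_equiv e (fun a => ∑' k, f (e a) k) _ fun _ => rfl]
    simp only [Function.comp_def, hcomp]
    exact ⟨hs, hh⟩
  · intro f _
    refine ⟨Summable.of_finite, ?_⟩
    convert hasSum_single (f := fun n : PEmpty → κ => ∏ i, f i (n i)) PEmpty.elim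
      fun n hn => (hn (Subsingleton.elim _ _)).elim using 1
    simp
  · intro α _ ih f hf
    obtain ⟨hs, hh⟩ := ih (fun a => f (some a)) fun a => hf (some a)
    let eκ : κ × (α → κ) ≃ (Option α → κ) := (Equiv.piOptionEquivProd (β := fun _ => κ)).symm
    have hcomp (n : κ × (α → κ)) :
        ∏ i, f i (eκ n i) = f none n.1 * ∏ a, f (some a) (n.2 a) := by
      simp [eκ, Fintype.prod_option]
    rw [← eκ.summable_iff, ← eκ.hasSum_iff, Fintype.prod_option]
    simp only [Function.comp_def, hcomp]
    have hnone : HasSum (f none) (∑' k, f none k) := (hf none).of_norm.hasSum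
    have hprod := summable_mul_of_summable_norm (hf none) hs
    have hnorm := (hf none).mul_norm hs
    have hmul := hnone.mul hh hprod
    exact ⟨hnorm, hmul⟩

theorem tsum_prod_eq_tsum_sum_Iic {ι : Type*} [Fintype ι] [DecidableEq ι]
    (F : (ι → ℕ) × (ι → ℕ) → ℝ≥0∞) :
    ∑' p, F p = ∑' m : ι → ℕ, ∑ k ∈ Iic m, F (k, m - k) := by
  let φ : (ι → ℕ) × (ι → ℕ) ≃ Σ m : ι → ℕ, (Iic m : Set (ι → ℕ)) :=
    { toFun := fun p => ⟨p.1 + p.2, p.1, by simp⟩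
      invFun := fun q => (q.2.1, q.1 - q.2.1)
      left_inv := fun p => by simp
      right_inv := fun q =>
        Sigma.subtype_ext (add_tsub_cancel_of_le (by simpa using q.2.2)) rfl }
  rw [← φ.symm.tsum_eq, ENNReal.tsum_sigma']
  exact tsum_congr fun m => Finset.tsum_subtype (Iic m) fun k => F (k, m - k)

theorem Finset.prod_mul_prod_eq_prod_symmDiff {α M : Type*} [DecidableEq α] [CommMonoid M]
    {f : α → M} (hf : ∀ a, f a * f a = 1) (s t : Finset α) :
    (∏ a ∈ s, f a) * ∏ a ∈ t, f a = ∏ a ∈ s ∆ t, f a := by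
  have hunion : s ∪ t = s ∆ t ∪ s ∩ t := (symmDiff_sup_inf s t).symm
  rw [← prod_union_inter, hunion,
    prod_union (s₁ := s ∆ t) (s₂ := s ∩ t) (disjoint_symmDiff_inf s t), mul_assoc,
    ← prod_mul_distrib]
  simp [hf]

theorem Finset.card_symmDiff_add_card_inter_add_card_inter {α : Type*} [DecidableEq α]
    (s t : Finset α) : #(s ∆ t) + #(s ∩ t) + #(s ∩ t) = #s + #t := by
  have hunion : s ∪ t = s ∆ t ∪ s ∩ t := (symmDiff_sup_inf s t).symm
  rw [← card_union_add_card_inter s t, hunion,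
    card_union_of_disjoint (s := s ∆ t) (t := s ∩ t) (disjoint_symmDiff_inf s t)]

section Spins

variable {V : Type*}

theorem spin_mul_self (σ : V → Bool) (v : V) : spin σ v * spin σ v = 1 := by
  unfold spin; split <;> norm_num

variable [DecidableEq V]

theorem prod_spin_mul_prod_spin (σ : V → Bool) (s t : Finset V) :
    (∏ a ∈ s, spin σ a) * ∏ a ∈ t, spin σ a = ∏ a ∈ s ∆ t, spin σ a :=
  prod_mul_prod_eq_prod_symmDiff (spin_mul_self σ) s t

theorem spin_mul_spin (σ : V → Bool) (u v : V) :
    spin σ u * spin σ v = ∏ a ∈ {u} ∆ {v}, spin σ a := by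
  rw [← prod_spin_mul_prod_spin, prod_singleton, prod_singleton]

theorem sum_prod_spin_pow [Fintype V] (c : V → ℕ) :
    ∑ σ : V → Bool, ∏ v, spin σ v ^ c v = if ∀ v, Even (c v) then 2 ^ Fintype.card V else 0 := by
  have hpair (k : ℕ) : ∑ b : Bool, (if b then (1 : ℝ) else -1) ^ k = if Even k then 2 else 0 := by
    rcases Nat.even_or_odd k with hk | hk
    · simp [hk.neg_one_pow, hk, one_add_one_eq_two]
    · simp [hk.neg_one_pow, Nat.not_even_iff_odd.2 hk]
  calc ∑ σ : V → Bool, ∏ v, spin σ v ^ c v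
      = ∏ v, ∑ b : Bool, (if b then (1 : ℝ) else -1) ^ c v :=
        (Fintype.prod_sum fun v (b : Bool) => (if b then (1 : ℝ) else -1) ^ c v).symm
    _ = _ := by simp only [hpair, Fintype.prod_ite_zero, prod_const, card_univ]

end Spins

section Currents

variable {V E : Type*} (ep : E → V × V)

theorem curConn_mono {n n' : E → ℕ} (h : n ≤ n') {u v : V} (hc : curConn ep n u v) :
    curConn ep n' u v :=
  Relation.ReflTransGen.mono (fun _ _ ⟨e, he, hxy⟩ => ⟨e, he.trans_le (h e), hxy⟩) _ _ hc

variable [Fintype E]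

theorem curWt_nonneg {J : E → ℝ} (hJ : ∀ e, 0 ≤ J e) (n : E → ℕ) : 0 ≤ curWt J n :=
  prod_nonneg fun e _ => by have := hJ e; positivity

theorem summable_curWt (J : E → ℝ) : Summable (curWt J) :=
  (summable_norm_and_hasSum_prod_pi (fun e k => J e ^ k / (Nat.factorial k : ℝ))
    fun e => NormedSpace.norm_expSeries_div_summable (J e)).1.of_norm

theorem curWt_mul_curWt_tsub (J : E → ℝ) {k m : E → ℕ} (h : k ≤ m) :
    curWt J k * curWt J (m - k) = curWt J m * ∏ e, ((m e).choose (k e) : ℝ) := by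
  simp only [curWt, ← prod_mul_distrib]
  refine prod_congr rfl fun e _ => ?_
  have hfac : ((m e).choose (k e) : ℝ) * (k e).factorial * (m e - k e).factorial
      = (m e).factorial := by exact_mod_cast Nat.choose_mul_factorial_mul_factorial (h e)
  have hpow : J e ^ k e * J e ^ (m e - k e) = J e ^ m e := by
    rw [← pow_add, Nat.add_sub_cancel' (h e)]
  have hchoose : ((m e).choose (k e) : ℝ) ≠ 0 := by
    exact_mod_cast (Nat.choose_pos (h e)).ne'
  rw [Pi.sub_apply, ← hfac, ← hpow]
  field_simp

theorem hasSum_curWt_mul_prod_edge_pow (J : E → ℝ) (σ : V → Bool) :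
    HasSum (fun n : E → ℕ => curWt J n * ∏ e, (spin σ (ep e).1 * spin σ (ep e).2) ^ n e)
      (edgeWt ep J σ) := by
  set x : E → ℝ := fun e => J e * spin σ (ep e).1 * spin σ (ep e).2
  obtain ⟨-, h⟩ := summable_norm_and_hasSum_prod_pi (fun e k => x e ^ k / (Nat.factorial k : ℝ))
    fun e => NormedSpace.norm_expSeries_div_summable (x e)
  have hexp (e : E) : ∑' k, x e ^ k / (Nat.factorial k : ℝ) = Real.exp (x e) := by
    rw [Real.exp_eq_exp_ℝ, (NormedSpace.expSeries_div_hasSum_exp (x e)).tsum_eq]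
  have hterm (n : E → ℕ) : curWt J n * ∏ e, (spin σ (ep e).1 * spin σ (ep e).2) ^ n e
      = ∏ e, x e ^ n e / (Nat.factorial (n e) : ℝ) := by
    simp only [curWt, x, ← prod_mul_distrib]
    exact prod_congr rfl fun e _ => by ring
  simp only [hexp, ← Real.exp_sum] at h
  simp only [hterm]
  exact h

variable [DecidableEq V]

theorem curDeg_add (n n' : E → ℕ) (v : V) :
    curDeg ep (n + n') v = curDeg ep n v + curDeg ep n' v := by
  simp only [curDeg, Pi.add_apply, add_mul, sum_add_distrib]

variable [Fintype V]

theorem prod_edge_pow_eq_prod_pow_curDeg {M : Type*} [CommMonoid M] (n : E → ℕ) (s : V → M) :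
    ∏ e, (s (ep e).1 * s (ep e).2) ^ n e = ∏ v, s v ^ curDeg ep n v := by
  simp only [curDeg, ← prod_pow_eq_pow_sum, mul_add, pow_add, prod_mul_distrib]
  rw [prod_comm, prod_comm (f := fun v e => s v ^ (n e * if (ep e).2 = v then 1 else 0)),
    ← prod_mul_distrib]
  refine prod_congr rfl fun e _ => ?_
  simp [mul_pow, mul_ite]

theorem mem_curSources {n : E → ℕ} {v : V} : v ∈ curSources ep n ↔ Odd (curDeg ep n v) := by
  simp [curSources]

theorem curSources_eq_iff_forall_even (n : E → ℕ) (A : Finset V) :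
    curSources ep n = A ↔ ∀ v, Even ((if v ∈ A then 1 else 0) + curDeg ep n v) := by
  simp only [Finset.ext_iff, mem_curSources]
  refine forall_congr' fun v => ?_
  split_ifs with hv <;> simp [hv, Nat.even_add_one, parity_simps]

theorem curSources_zero : curSources ep 0 = ∅ := by
  simp [curSources, curDeg]

theorem curSources_single (e : E) :
    curSources ep (Pi.single e 1) = {(ep e).1} ∆ {(ep e).2} := by
  ext v
  simp only [mem_curSources, curDeg, Pi.single_apply, ite_mul, one_mul, zero_mul,
    sum_ite_eq', mem_univ, if_true, mem_symmDiff, mem_singleton]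
  grind

theorem curSources_add (n n' : E → ℕ) :
    curSources ep (n + n') = curSources ep n ∆ curSources ep n' := by
  ext v
  simp only [mem_curSources, curDeg_add, mem_symmDiff, Nat.odd_add, ← Nat.not_odd_iff_even]
  tauto

theorem curSources_add_self (n : E → ℕ) : curSources ep (n + n) = ∅ := by
  rw [curSources_add, symmDiff_self, bot_eq_empty]

theorem curSources_tsub {k m : E → ℕ} (h : k ≤ m) :
    curSources ep (m - k) = curSources ep m ∆ curSources ep k := by
  rw [← add_tsub_cancel_of_le h, curSources_add, add_tsub_cancel_left,
    symmDiff_symmDiff_self']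

theorem even_card_inter_curSources {n : E → ℕ} {S : Finset V}
    (hS : ∀ e, 0 < n e → ((ep e).1 ∈ S ↔ (ep e).2 ∈ S)) : Even #(S ∩ curSources ep n) := by
  have hfilter : S ∩ curSources ep n = {v ∈ S | Odd (curDeg ep n v)} := by
    ext v; simp [mem_curSources]
  rw [hfilter, ← even_sum_iff_even_card_odd]
  simp only [curDeg]
  rw [sum_comm]
  refine even_sum _ fun e _ => ?_
  rw [← mul_sum, sum_add_distrib, sum_ite_eq, sum_ite_eq]
  rcases (n e).eq_zero_or_pos with h0 | hpos
  · simp [h0]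
  · by_cases h1 : (ep e).1 ∈ S
    · simp [h1, (hS e hpos).1 h1]
    · simp [h1, (hS e hpos).not.1 h1]

theorem curConn_of_curSources_eq {n : E → ℕ} {u v : V} (h : curSources ep n = {u} ∆ {v}) :
    curConn ep n u v := by
  by_contra hc
  have huv : u ≠ v := by rintro rfl; exact hc .refl
  -- by the handshake lemma the component of `u` contains an even number of sources, not one
  set S : Finset V := {x | curConn ep n u x}
  have hS : ∀ e, 0 < n e → ((ep e).1 ∈ S ↔ (ep e).2 ∈ S) := fun e he => by
    simp only [S, mem_filter, mem_univ, true_and]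
    exact ⟨fun h1 => h1.tail ⟨e, he, .inl rfl⟩, fun h2 => h2.tail ⟨e, he, .inr rfl⟩⟩
  have hinter : S ∩ curSources ep n = {u} := by
    ext x
    simp only [h, S, mem_inter, mem_filter, mem_univ, true_and, mem_symmDiff, mem_singleton]
    constructor
    · rintro ⟨hx, ⟨rfl, -⟩ | ⟨rfl, -⟩⟩
      · rfl
      · exact (hc hx).elim
    · rintro rfl; exact ⟨.refl, .inl ⟨rfl, huv⟩⟩
  have := even_card_inter_curSources ep hS
  rw [hinter, card_singleton] at this
  exact Nat.not_even_one this

theorem exists_le_curSources_eq_of_curConn {m : E → ℕ} {u v : V} (h : curConn ep m u v) :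
    ∃ k ≤ m, curSources ep k = {u} ∆ {v} := by
  induction h with
  | refl => exact ⟨0, zero_le, by rw [curSources_zero, symmDiff_self, bot_eq_empty]⟩
  | @tail x y _ hxy ih =>
    obtain ⟨k, hkm, hk⟩ := ih
    obtain ⟨e, he, hend⟩ := hxy
    have hsingle : curSources ep (Pi.single e 1) = {x} ∆ {y} := by
      rcases hend with h | h <;> simp [curSources_single, h, symmDiff_comm]
    suffices ∃ k' ≤ m, curSources ep k' = curSources ep k ∆ curSources ep (Pi.single e 1) by
      rwa [hk, hsingle, ← symmDiff_assoc, symmDiff_symmDiff_cancel_right] at this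
    by_cases hke : k e < m e
    · refine ⟨k + Pi.single e 1, fun e' => ?_, curSources_add ep _ _⟩
      rcases eq_or_ne e' e with rfl | hne
      · simpa using hke
      · simpa [hne] using hkm e'
    · have hle : Pi.single e 1 ≤ k := fun e' => by
        rcases eq_or_ne e' e with rfl | hne
        · have := hkm e'; simp; omega
        · simp [hne]
      exact ⟨k - Pi.single e 1, tsub_le_self.trans hkm, curSources_tsub ep hle⟩

theorem sum_prod_spin_mul_prod_edge_pow (A : Finset V) (n : E → ℕ) :
    ∑ σ : V → Bool, (∏ a ∈ A, spin σ a) * ∏ e, (spin σ (ep e).1 * spin σ (ep e).2) ^ n e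
      = if curSources ep n = A then 2 ^ Fintype.card V else 0 := by
  have hprod (σ : V → Bool) :
      (∏ a ∈ A, spin σ a) * ∏ e, (spin σ (ep e).1 * spin σ (ep e).2) ^ n e
        = ∏ v, spin σ v ^ ((if v ∈ A then 1 else 0) + curDeg ep n v) := by
    rw [prod_edge_pow_eq_prod_pow_curDeg, ← Fintype.prod_ite_mem, ← prod_mul_distrib]
    refine prod_congr rfl fun v _ => ?_
    split_ifs <;> simp [pow_add]
  simp only [hprod, sum_prod_spin_pow, curSources_eq_iff_forall_even]

end Currents

section PartitionFunctions

variable {V E : Type*} [Fintype V] [DecidableEq V] [Fintype E] (ep : E → V × V)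

noncomputable def currentSum (J : E → ℝ) (A : Finset V) : ℝ :=
  ∑' n : E → ℕ, if curSources ep n = A then curWt J n else 0

theorem sum_prod_spin_mul_edgeWt (J : E → ℝ) (A : Finset V) :
    ∑ σ : V → Bool, (∏ a ∈ A, spin σ a) * edgeWt ep J σ
      = 2 ^ Fintype.card V * currentSum ep J A := by
  have h := hasSum_sum (s := univ) fun σ _ =>
    (hasSum_curWt_mul_prod_edge_pow ep J σ).mul_left (∏ a ∈ A, spin σ a)
  rw [← h.tsum_eq, currentSum, ← tsum_mul_left]
  refine tsum_congr fun n => ?_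
  simp_rw [mul_left_comm _ (curWt J n), ← mul_sum, sum_prod_spin_mul_prod_edge_pow]
  split_ifs <;> ring

theorem sum_edgeWt (J : E → ℝ) :
    ∑ σ : V → Bool, edgeWt ep J σ = 2 ^ Fintype.card V * currentSum ep J ∅ := by
  simpa using sum_prod_spin_mul_edgeWt ep J ∅

theorem currentSum_empty_pos (J : E → ℝ) : 0 < currentSum ep J ∅ := by
  have h : 0 < ∑ σ : V → Bool, edgeWt ep J σ :=
    sum_pos (fun σ _ => Real.exp_pos _) univ_nonempty
  rw [sum_edgeWt] at h
  exact pos_of_mul_pos_right h (by positivity)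

theorem edgeEv_prod_spin (J : E → ℝ) (A : Finset V) :
    edgeEv ep J (fun σ => ∏ a ∈ A, spin σ a) = currentSum ep J A / currentSum ep J ∅ := by
  rw [edgeEv, sum_prod_spin_mul_edgeWt, sum_edgeWt, mul_div_mul_left _ _ (by positivity)]

theorem currentSum_empty_sq_mul_sub (J : E → ℝ) (A B : Finset V) :
    currentSum ep J ∅ ^ 2 * (edgeEv ep J (fun σ => ∏ a ∈ A ∆ B, spin σ a) -
        edgeEv ep J (fun σ => ∏ a ∈ A, spin σ a) * edgeEv ep J (fun σ => ∏ a ∈ B, spin σ a))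
      = currentSum ep J (A ∆ B) * currentSum ep J ∅ - currentSum ep J A * currentSum ep J B := by
  simp only [edgeEv_prod_spin]
  field_simp [(currentSum_empty_pos ep J).ne']

theorem currentSum_nonneg {J : E → ℝ} (hJ : ∀ e, 0 ≤ J e) (A : Finset V) :
    0 ≤ currentSum ep J A :=
  tsum_nonneg fun n => by split_ifs <;> simp [curWt_nonneg hJ n]

theorem ofReal_currentSum {J : E → ℝ} (hJ : ∀ e, 0 ≤ J e) (A : Finset V) :
    ENNReal.ofReal (currentSum ep J A)
      = ∑' n : E → ℕ, if curSources ep n = A then ENNReal.ofReal (curWt J n) else 0 := by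
  have hnonneg (n : E → ℕ) : 0 ≤ if curSources ep n = A then curWt J n else 0 := by
    split_ifs <;> simp [curWt_nonneg hJ n]
  have hsum : Summable fun n => if curSources ep n = A then curWt J n else 0 :=
    (summable_curWt J).of_nonneg_of_le hnonneg fun n => by
      split_ifs <;> simp [curWt_nonneg hJ n]
  rw [currentSum, ENNReal.ofReal_tsum_of_nonneg hnonneg hsum]
  simp only [apply_ite ENNReal.ofReal, ENNReal.ofReal_zero]

/-- Extended-real valued, so that sums over pairs of currents can be rearranged freely. -/
noncomputable def pairWt (J : E → ℝ) (A B : Finset V) (p : (E → ℕ) × (E → ℕ)) : ℝ≥0∞ :=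
  if curSources ep p.1 = A ∧ curSources ep p.2 = B then ENNReal.ofReal (curWt J p.1 * curWt J p.2)
  else 0

theorem ofReal_currentSum_mul {J : E → ℝ} (hJ : ∀ e, 0 ≤ J e) (A B : Finset V) :
    ENNReal.ofReal (currentSum ep J A * currentSum ep J B) = ∑' p, pairWt ep J A B p := by
  rw [ENNReal.ofReal_mul (currentSum_nonneg ep hJ A), ofReal_currentSum ep hJ,
    ofReal_currentSum ep hJ, ← ENNReal.tsum_mul_right, ENNReal.tsum_prod']
  refine tsum_congr fun a => ?_
  rw [← ENNReal.tsum_mul_left]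
  refine tsum_congr fun b => ?_
  rw [pairWt, ite_zero_mul_ite_zero, ENNReal.ofReal_mul (curWt_nonneg hJ a)]

theorem tsum_subtype_eq_toReal_tsum_pairWt {J : E → ℝ} (hJ : ∀ e, 0 ≤ J e) (A B : Finset V)
    {c : (E → ℕ) × (E → ℕ) → ℝ} (hc : ∀ p, 0 ≤ c p) :
    ∑' p : {p : (E → ℕ) × (E → ℕ) // curSources ep p.1 = A ∧ curSources ep p.2 = B},
        curWt J p.1.1 * curWt J p.1.2 * c p.1
      = (∑' p, pairWt ep J A B p * ENNReal.ofReal (c p)).toReal := by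
  rw [ENNReal.tsum_toReal_eq fun p => ENNReal.mul_ne_top (by unfold pairWt; split_ifs <;> simp)
    ENNReal.ofReal_ne_top]
  refine (tsum_subtype {p : (E → ℕ) × (E → ℕ) | curSources ep p.1 = A ∧ curSources ep p.2 = B}
    fun p : (E → ℕ) × (E → ℕ) => curWt J p.1 * curWt J p.2 * c p).trans (tsum_congr fun p => ?_)
  by_cases hp : curSources ep p.1 = A ∧ curSources ep p.2 = B
  · simp [pairWt, hp, Set.indicator_of_mem, ENNReal.toReal_ofReal, hc, curWt_nonneg hJ]
  · simp [pairWt, hp, Set.indicator_of_notMem]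

end PartitionFunctions

section Switching

variable {V E : Type*} [Fintype V] [DecidableEq V] [Fintype E] (ep : E → V × V)

/-- The number of submultigraphs with source set `R` of the multigraph with `m e` parallel
copies of each edge `e`. -/
noncomputable def subgraphCount (m : E → ℕ) (R : Finset V) : ℕ :=
  #{S : ∀ e, Finset (Fin (m e)) | curSources ep (fun e => #(S e)) = R}

theorem subgraphCount_eq_sum (m : E → ℕ) (R : Finset V) :
    subgraphCount ep m R
      = ∑ k ∈ Iic m, if curSources ep k = R then ∏ e, (m e).choose (k e) else 0 := by
  rw [subgraphCount, card_eq_sum_card_fiberwise (f := fun S e => #(S e)) (t := Iic m)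
    fun S _ => mem_Iic.2 fun e => by simpa using card_le_univ (S e)]
  refine sum_congr rfl fun k _ => ?_
  have hfiber : {S ∈ ({S : ∀ e, Finset (Fin (m e)) | curSources ep (fun e => #(S e)) = R} :
        Finset _) | (fun e => #(S e)) = k}
      = if curSources ep k = R then Fintype.piFinset fun e => powersetCard (k e) univ else ∅ := by
    ext S
    simp only [mem_filter, mem_univ, true_and]
    rw [and_congr_left fun h : (fun e => #(S e)) = k => by rw [h]]
    split_ifs with hk <;> simp [hk, funext_iff, mem_powersetCard]
  rw [hfiber]
  split_ifs <;> simp [Fintype.card_piFinset, card_powersetCard]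

theorem curSources_card_symmDiff {m : E → ℕ} (S K : ∀ e, Finset (Fin (m e))) :
    curSources ep (fun e => #(S e ∆ K e))
      = curSources ep (fun e => #(S e)) ∆ curSources ep (fun e => #(K e)) := by
  have hcard : (fun e => #(S e ∆ K e)) + ((fun e => #(S e ∩ K e)) + fun e => #(S e ∩ K e))
      = (fun e => #(S e)) + fun e => #(K e) :=
    funext fun e => by simp [← add_assoc, card_symmDiff_add_card_inter_add_card_inter]
  rw [← curSources_add, ← hcard, curSources_add, curSources_add_self, ← bot_eq_empty,
    symmDiff_bot]

theorem subgraphCount_symmDiff_curSources {k m : E → ℕ} (hk : k ≤ m) (R : Finset V) :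
    subgraphCount ep m (R ∆ curSources ep k) = subgraphCount ep m R := by
  choose K hK using fun e => exists_subset_card_eq (s := (univ : Finset (Fin (m e))))
    (n := k e) (by simpa using hk e)
  have hKsrc : curSources ep (fun e => #(K e)) = curSources ep k :=
    congrArg _ (funext fun e => (hK e).2)
  have hinv : Function.Involutive fun (S : ∀ e, Finset (Fin (m e))) e => S e ∆ K e :=
    fun S => funext fun e => symmDiff_symmDiff_cancel_right _ _
  refine (card_equiv hinv.toPerm fun S => ?_).symm
  simp [curSources_card_symmDiff, hKsrc]

theorem subgraphCount_eq_ite_curConn {m : E → ℕ} {R : Finset V} {u v : V}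
    (h : curSources ep m = R ∆ ({u} ∆ {v})) :
    subgraphCount ep m R
      = if curConn ep m u v then subgraphCount ep m (R ∆ ({u} ∆ {v})) else 0 := by
  split_ifs with hc
  · obtain ⟨k, hkm, hk⟩ := exists_le_curSources_eq_of_curConn ep hc
    rw [← hk, subgraphCount_symmDiff_curSources ep hkm]
  · rw [subgraphCount_eq_sum]
    refine sum_eq_zero fun k hk => if_neg fun hkR => hc ?_
    have hkm := mem_Iic.1 hk
    refine curConn_mono ep (tsub_le_self (b := k)) (curConn_of_curSources_eq ep ?_)
    rw [curSources_tsub ep hkm, h, hkR, symmDiff_symmDiff_self']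

theorem sum_Iic_pairWt (J : E → ℝ) (A B : Finset V) (m : E → ℕ) :
    ∑ k ∈ Iic m, pairWt ep J A B (k, m - k)
      = if curSources ep m = A ∆ B then ENNReal.ofReal (curWt J m) * subgraphCount ep m A
        else 0 := by
  have hterm : ∀ k ∈ Iic m, pairWt ep J A B (k, m - k)
      = if curSources ep m = A ∆ B then ENNReal.ofReal (curWt J m) *
          ((if curSources ep k = A then ∏ e, (m e).choose (k e) else 0 : ℕ) : ℝ≥0∞) else 0 := by
    intro k hk
    have hkm := mem_Iic.1 hk
    by_cases hkA : curSources ep k = A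
    · have hiff : curSources ep m ∆ A = B ↔ curSources ep m = A ∆ B := by
        rw [← symmDiff_left_inj (b := A), symmDiff_symmDiff_cancel_right, symmDiff_comm B]
      simp only [pairWt, curSources_tsub ep hkm, hkA, true_and, hiff, if_true,
        curWt_mul_curWt_tsub J hkm]
      split_ifs
      · rw [ENNReal.ofReal_mul' (by positivity), ← Nat.cast_prod, ENNReal.ofReal_natCast]
      · rfl
    · simp [pairWt, hkA]
  rw [sum_congr rfl hterm, subgraphCount_eq_sum]
  split_ifs <;> simp [mul_sum]

theorem tsum_pairWt_switch (J : E → ℝ) (Q : Finset V) (u v : V) :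
    ∑' p, pairWt ep J Q ({u} ∆ {v}) p
      = ∑' p, pairWt ep J (Q ∆ ({u} ∆ {v})) ∅ p * if curConn ep (p.1 + p.2) u v then 1 else 0 := by
  rw [tsum_prod_eq_tsum_sum_Iic, tsum_prod_eq_tsum_sum_Iic]
  refine tsum_congr fun m => ?_
  have hsum : ∑ k ∈ Iic m, pairWt ep J (Q ∆ ({u} ∆ {v})) ∅ (k, m - k) *
        (if curConn ep (k + (m - k)) u v then 1 else 0)
      = (∑ k ∈ Iic m, pairWt ep J (Q ∆ ({u} ∆ {v})) ∅ (k, m - k)) *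
        if curConn ep m u v then 1 else 0 := by
    rw [sum_mul]
    exact sum_congr rfl fun k hk => by rw [add_tsub_cancel_of_le (mem_Iic.1 hk)]
  rw [hsum, sum_Iic_pairWt, sum_Iic_pairWt, ← bot_eq_empty, symmDiff_bot]
  by_cases hm : curSources ep m = Q ∆ ({u} ∆ {v})
  · rw [if_pos hm, if_pos hm, subgraphCount_eq_ite_curConn ep hm]
    split_ifs <;> simp
  · rw [if_neg hm, if_neg hm, zero_mul]

theorem currentSum_mul_sub_currentSum_mul {J : E → ℝ} (hJ : ∀ e, 0 ≤ J e) (Q : Finset V)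
    (u v : V) :
    currentSum ep J (Q ∆ ({u} ∆ {v})) * currentSum ep J ∅
        - currentSum ep J Q * currentSum ep J ({u} ∆ {v})
      = ∑' p : {p : (E → ℕ) × (E → ℕ) //
            curSources ep p.1 = Q ∆ ({u} ∆ {v}) ∧ curSources ep p.2 = ∅},
          curWt J p.1.1 * curWt J p.1.2 * (if curConn ep (p.1.1 + p.1.2) u v then 0 else 1) := by
  set D := ∑' p, pairWt ep J (Q ∆ ({u} ∆ {v})) ∅ p *
    ENNReal.ofReal (if curConn ep (p.1 + p.2) u v then 0 else 1)
  have hsplit : ENNReal.ofReal (currentSum ep J (Q ∆ ({u} ∆ {v})) * currentSum ep J ∅)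
      = ENNReal.ofReal (currentSum ep J Q * currentSum ep J ({u} ∆ {v})) + D := by
    rw [ofReal_currentSum_mul ep hJ, ofReal_currentSum_mul ep hJ, tsum_pairWt_switch,
      ← ENNReal.tsum_add]
    refine tsum_congr fun p => ?_
    split_ifs <;> simp
  have hD : D ≠ ⊤ := ne_top_of_le_ne_top ENNReal.ofReal_ne_top (hsplit ▸ le_add_self)
  have hreal := congrArg ENNReal.toReal hsplit
  rw [ENNReal.toReal_add ENNReal.ofReal_ne_top hD, ENNReal.toReal_ofReal
    (mul_nonneg (currentSum_nonneg ep hJ _) (currentSum_nonneg ep hJ _)), ENNReal.toReal_ofReal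
    (mul_nonneg (currentSum_nonneg ep hJ _) (currentSum_nonneg ep hJ _))] at hreal
  have hD_eq := tsum_subtype_eq_toReal_tsum_pairWt ep hJ (Q ∆ ({u} ∆ {v})) ∅
    (c := fun p => if curConn ep (p.1 + p.2) u v then 0 else 1)
    fun p => by split_ifs <;> norm_num
  rw [hD_eq]
  linarith

end Switching

/-- Correlation-difference identity via random currents, and the resulting
nonnegativity `⟨σ_Q σ_u σ_v⟩ - ⟨σ_Q⟩⟨σ_u σ_v⟩ ≥ 0`. -/
theorem correlation_difference_random_current {V E : Type*} [Fintype V] [DecidableEq V]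
    [Fintype E] (ep : E → V × V) (J : E → ℝ) (hferro : ∀ e, 0 ≤ J e)
    (Q : Finset V) (u v : V) :
    (((∑ σ : V → Bool, edgeWt ep J σ) / 2 ^ (Fintype.card V)) ^ 2 *
        (edgeEv ep J (fun σ => (∏ a ∈ Q, spin σ a) * spin σ u * spin σ v) -
          edgeEv ep J (fun σ => ∏ a ∈ Q, spin σ a) *
            edgeEv ep J (fun σ => spin σ u * spin σ v))
      = ∑' p : {p : (E → ℕ) × (E → ℕ) //
            curSources ep p.1 = symmDiff Q {u, v} ∧ curSources ep p.2 = ∅},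
          curWt J p.1.1 * curWt J p.1.2 *
            (if curConn ep (p.1.1 + p.1.2) u v then 0 else 1)) ∧
      0 ≤ edgeEv ep J (fun σ => (∏ a ∈ Q, spin σ a) * spin σ u * spin σ v) -
            edgeEv ep J (fun σ => ∏ a ∈ Q, spin σ a) *
              edgeEv ep J (fun σ => spin σ u * spin σ v) := by
  have hZ : (∑ σ : V → Bool, edgeWt ep J σ) / 2 ^ Fintype.card V = currentSum ep J ∅ := by
    rw [sum_edgeWt, mul_div_cancel_left₀ _ (by positivity)]
  have hcorr : (fun σ => (∏ a ∈ Q, spin σ a) * spin σ u * spin σ v)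
      = fun σ => ∏ a ∈ Q ∆ ({u} ∆ {v}), spin σ a :=
    funext fun σ => by rw [mul_assoc, spin_mul_spin, prod_spin_mul_prod_spin]
  have hpair : (fun σ => spin σ u * spin σ v) = fun σ => ∏ a ∈ {u} ∆ {v}, spin σ a :=
    funext fun σ => spin_mul_spin σ u v
  have hZ_pos : 0 < currentSum ep J ∅ ^ 2 := pow_pos (currentSum_empty_pos ep J) 2
  have hidentity := (currentSum_empty_sq_mul_sub ep J Q ({u} ∆ {v})).trans
    (currentSum_mul_sub_currentSum_mul ep hferro Q u v)
  rw [hZ, hcorr, hpair]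
  rcases eq_or_ne u v with rfl | huv
  · have hrefl (n : E → ℕ) : curConn ep n u u := .refl
    simp only [hrefl, if_true, mul_zero, tsum_zero] at hidentity ⊢
    exact ⟨hidentity, nonneg_of_mul_nonneg_right hidentity.ge hZ_pos⟩
  · rw [insert_eq, ← symmDiff_eq_union (disjoint_singleton.2 huv)]
    refine ⟨hidentity, nonneg_of_mul_nonneg_right (hidentity ▸ tsum_nonneg fun p => ?_) hZ_pos⟩
    exact mul_nonneg (mul_nonneg (curWt_nonneg hferro _) (curWt_nonneg hferro _))
      (by split_ifs <;> norm_num)
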